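/- Let k ≥ 2, n = 4k+7, and define D = D_{2k+3} ∪ (⋃_{j odd, j ≥ 2k+5} P_n(j)), where D_{2k+3} = A_m is the Fano-based family of (2k+3)-sets and P_n(j) is all j-element subsets of [n]. Then D is a maximal intersecting family of odd-size subsets of [n]: any two members intersect, and every odd-size subset not in D is disjoint from some member of D. -/
import Mathlib
set_option maxRecDepth 100000


def fanoShift (k : ℕ) : Finset (Finset ℕ) :=
  { {4*k+1, 4*k+2, 4*k+5}, {4*k+1, 4*k+3, 4*k+6}, {4*k+1, 4*k+4, 4*k+7},
    {4*k+2, 4*k+3, 4*k+7}, {4*k+3, 4*k+4, 4*k+5}, {4*k+5, 4*k+6, 4*k+7},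
    {4*k+2, 4*k+4, 4*k+6} }

/-- The Fano-based family `A_m = B₁ ∪ ⋯ ∪ B₁₀` of `(2k+3)`-subsets of `[4k+7]`. -/
def Am (k : ℕ) : Set (Finset ℕ) :=
  {S | (∃ T ∈ fanoShift k, ∃ S' : Finset ℕ,
          S' ⊆ Finset.Icc 1 (4*k) ∧ S'.card = 2*k ∧ S = T ∪ S')
    ∨ (∃ S' S'' : Finset ℕ, S' ⊆ Finset.Icc (4*k+1) (4*k+7) ∧ S'.card = 2 ∧
          S'' ⊆ Finset.Icc 1 (4*k) ∧ S''.card = 2*k+1 ∧ S = S' ∪ S'')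
    ∨ (∃ S' S'' : Finset ℕ, S' ⊆ Finset.Icc (4*k+1) (4*k+7) ∧ S'.card = 1 ∧
          S'' ⊆ Finset.Icc 1 (4*k) ∧ S''.card = 2*k+2 ∧ S = S' ∪ S'')
    ∨ (S ⊆ Finset.Icc 1 (4*k) ∧ S.card = 2*k+3)}

/-- The family `D = A_m ∪ (all odd subsets of `[4k+7]` of size ≥ 2k+5)`. -/
def Dfam (k : ℕ) : Set (Finset ℕ) :=
  {S | S ⊆ Finset.Icc 1 (4*k+7) ∧ (S ∈ Am k ∨ (Odd S.card ∧ 2*k+5 ≤ S.card))}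

lemma fanoShift_eq (k : ℕ) : fanoShift k = (fanoShift 0).image (Finset.image (· + 4*k)) := by
  simp [fanoShift, Finset.image_insert, Finset.image_singleton, Nat.add_comm]

lemma fano_d1 : ∀ T ∈ fanoShift 0, T ⊆ Finset.Icc 1 7 ∧ T.card = 3 := by decide
lemma fano_d2 : ∀ T ∈ fanoShift 0, ∀ T' ∈ fanoShift 0, (T ∩ T').Nonempty := by decide
lemma fano_d3 : ∀ X ∈ (Finset.Icc 1 7).powerset, X.card = 3 → X ∉ fanoShift 0 →
    ∃ T ∈ fanoShift 0, Disjoint T X := by decide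

lemma line_sub {k : ℕ} {T : Finset ℕ} (h : T ∈ fanoShift k) :
    T ⊆ Finset.Icc (4*k+1) (4*k+7) := by
  rw [fanoShift_eq] at h
  obtain ⟨T₀, h0, rfl⟩ := Finset.mem_image.mp h
  intro x hx
  obtain ⟨y, hy, rfl⟩ := Finset.mem_image.mp hx
  have := Finset.mem_Icc.mp ((fano_d1 T₀ h0).1 hy)
  rw [Finset.mem_Icc]; omega

lemma line_card {k : ℕ} {T : Finset ℕ} (h : T ∈ fanoShift k) : T.card = 3 := by
  rw [fanoShift_eq] at h
  obtain ⟨T₀, h0, rfl⟩ := Finset.mem_image.mp h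
  rw [Finset.card_image_of_injective _ (add_left_injective _)]
  exact (fano_d1 T₀ h0).2

lemma fano_inter {k : ℕ} {T T' : Finset ℕ} (h : T ∈ fanoShift k) (h' : T' ∈ fanoShift k) :
    (T ∩ T').Nonempty := by
  rw [fanoShift_eq] at h h'
  obtain ⟨T₀, h0, rfl⟩ := Finset.mem_image.mp h
  obtain ⟨T₀', h0', rfl⟩ := Finset.mem_image.mp h'
  obtain ⟨x, hx⟩ := fano_d2 T₀ h0 T₀' h0'
  rw [Finset.mem_inter] at hx
  exact ⟨x + 4*k, Finset.mem_inter.mpr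
    ⟨Finset.mem_image_of_mem _ hx.1, Finset.mem_image_of_mem _ hx.2⟩⟩

lemma fano_cover {k : ℕ} {X : Finset ℕ} (hX : X ⊆ Finset.Icc (4*k+1) (4*k+7))
    (hc : X.card = 3) (hn : X ∉ fanoShift k) : ∃ T ∈ fanoShift k, Disjoint T X := by
  set X₀ := X.image (· - 4*k) with hX0
  have hmem : ∀ x ∈ X, 4*k+1 ≤ x ∧ x ≤ 4*k+7 := fun x hx => Finset.mem_Icc.mp (hX hx)
  have himg : X₀.image (· + 4*k) = X := by
    rw [hX0, Finset.image_image]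
    have : X.image ((· + 4*k) ∘ (· - 4*k)) = X.image id :=
      Finset.image_congr (fun x hx => by have := hmem x hx; simp; omega)
    rw [this, Finset.image_id]
  have hsub : X₀ ⊆ Finset.Icc 1 7 := by
    intro x hx
    obtain ⟨y, hy, rfl⟩ := Finset.mem_image.mp hx
    have := hmem y hy
    rw [Finset.mem_Icc]; omega
  have hcard : X₀.card = 3 := by
    rw [hX0, ← hc]
    apply Finset.card_image_of_injOn
    intro a ha b hb hab
    have := hmem a ha; have := hmem b hb
    simp only at hab; omega
  have hn0 : X₀ ∉ fanoShift 0 := fun h => hn (by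
    rw [fanoShift_eq]; exact himg ▸ Finset.mem_image_of_mem _ h)
  obtain ⟨T₀, hT₀, hdisj⟩ := fano_d3 X₀ (Finset.mem_powerset.mpr hsub) hcard hn0
  refine ⟨T₀.image (· + 4*k), by rw [fanoShift_eq]; exact Finset.mem_image_of_mem _ hT₀, ?_⟩
  rw [← himg, Finset.disjoint_left]
  intro a ha ha'
  obtain ⟨y, hy, rfl⟩ := Finset.mem_image.mp ha
  obtain ⟨y', hy', he⟩ := Finset.mem_image.mp ha'
  have : y' = y := by omega
  exact Finset.disjoint_left.mp hdisj hy (this ▸ hy')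

lemma HL_disj (k : ℕ) : Disjoint (Finset.Icc (4*k+1) (4*k+7)) (Finset.Icc 1 (4*k)) := by
  rw [Finset.disjoint_left]
  intro a ha ha'
  rw [Finset.mem_Icc] at ha ha'
  omega

lemma union_card {k : ℕ} {T S' : Finset ℕ} (hT : T ⊆ Finset.Icc (4*k+1) (4*k+7))
    (hS : S' ⊆ Finset.Icc 1 (4*k)) : (T ∪ S').card = T.card + S'.card :=
  Finset.card_union_of_disjoint ((HL_disj k).mono hT hS)

lemma Am_card {k : ℕ} {S : Finset ℕ} (h : S ∈ Am k) : S.card = 2*k+3 := by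
  rcases h with ⟨T, hT, S', hS', hc, rfl⟩ | ⟨S', S'', h1, h2, h3, h4, rfl⟩ |
    ⟨S', S'', h1, h2, h3, h4, rfl⟩ | ⟨h1, h2⟩
  · rw [union_card (line_sub hT) hS', line_card hT, hc]; ring
  · rw [union_card h1 h3, h2, h4]; ring
  · rw [union_card h1 h3, h2, h4]; ring
  · exact h2

lemma Am_subset {k : ℕ} {S : Finset ℕ} (h : S ∈ Am k) : S ⊆ Finset.Icc 1 (4*k+7) := by
  have hL : Finset.Icc 1 (4*k) ⊆ Finset.Icc 1 (4*k+7) := Finset.Icc_subset_Icc le_rfl (by omega)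
  have hH : Finset.Icc (4*k+1) (4*k+7) ⊆ Finset.Icc 1 (4*k+7) :=
    Finset.Icc_subset_Icc (by omega) le_rfl
  rcases h with ⟨T, hT, S', hS', _, rfl⟩ | ⟨S', S'', h1, _, h3, _, rfl⟩ |
    ⟨S', S'', h1, _, h3, _, rfl⟩ | ⟨h1, _⟩
  · exact Finset.union_subset ((line_sub hT).trans hH) (hS'.trans hL)
  · exact Finset.union_subset (h1.trans hH) (h3.trans hL)
  · exact Finset.union_subset (h1.trans hH) (h3.trans hL)
  · exact h1.trans hL

lemma inter_low {k : ℕ} {T S' : Finset ℕ} (hT : T ⊆ Finset.Icc (4*k+1) (4*k+7))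
    (hS : S' ⊆ Finset.Icc 1 (4*k)) : (T ∪ S') ∩ Finset.Icc 1 (4*k) = S' := by
  rw [Finset.union_inter_distrib_right,
    Finset.disjoint_iff_inter_eq_empty.mp ((HL_disj k).mono_left hT),
    Finset.inter_eq_left.mpr hS, Finset.empty_union]

lemma Am_lowcard {k : ℕ} {S : Finset ℕ} (h : S ∈ Am k) :
    ((S ∩ Finset.Icc 1 (4*k)).card = 2*k ∧ ∃ T ∈ fanoShift k, T ⊆ S)
      ∨ 2*k+1 ≤ (S ∩ Finset.Icc 1 (4*k)).card := by
  rcases h with ⟨T, hT, S', hS', hc, rfl⟩ | ⟨S', S'', h1, h2, h3, h4, rfl⟩ |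
    ⟨S', S'', h1, h2, h3, h4, rfl⟩ | ⟨h1, h2⟩
  · exact Or.inl ⟨by rw [inter_low (line_sub hT) hS', hc], T, hT, Finset.subset_union_left⟩
  · right; rw [inter_low h1 h3, h4]
  · right; rw [inter_low h1 h3, h4]; omega
  · right; rw [Finset.inter_eq_left.mpr h1, h2]; omega

lemma Am_inter {k : ℕ} {A B : Finset ℕ} (hA : A ∈ Am k) (hB : B ∈ Am k) :
    (A ∩ B).Nonempty := by
  by_contra h
  rw [Finset.not_nonempty_iff_eq_empty, ← Finset.disjoint_iff_inter_eq_empty] at h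
  have hd : Disjoint (A ∩ Finset.Icc 1 (4*k)) (B ∩ Finset.Icc 1 (4*k)) :=
    h.mono Finset.inter_subset_left Finset.inter_subset_left
  have hcard : (A ∩ Finset.Icc 1 (4*k)).card + (B ∩ Finset.Icc 1 (4*k)).card ≤ 4*k := by
    rw [← Finset.card_union_of_disjoint hd]
    calc ((A ∩ Finset.Icc 1 (4*k)) ∪ (B ∩ Finset.Icc 1 (4*k))).card
        ≤ (Finset.Icc 1 (4*k)).card :=
          Finset.card_le_card (Finset.union_subset Finset.inter_subset_right
            Finset.inter_subset_right)
      _ = 4*k := by rw [Nat.card_Icc]; omega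
  rcases Am_lowcard hA with ⟨hA1, TA, hTA, hTAs⟩ | hA2
  · rcases Am_lowcard hB with ⟨hB1, TB, hTB, hTBs⟩ | hB2
    · obtain ⟨x, hx⟩ := fano_inter hTA hTB
      rw [Finset.mem_inter] at hx
      exact (Finset.disjoint_left.mp h (hTAs hx.1)) (hTBs hx.2)
    · omega
  · rcases Am_lowcard hB with ⟨hB1, _⟩ | hB2 <;> omega

lemma pigeonhole {n : ℕ} {A B : Finset ℕ} (hA : A ⊆ Finset.Icc 1 n) (hB : B ⊆ Finset.Icc 1 n)
    (h : n + 1 ≤ A.card + B.card) : (A ∩ B).Nonempty := by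
  have h1 := Finset.card_union_add_card_inter A B
  have h2 : (A ∪ B).card ≤ n := by
    calc (A ∪ B).card ≤ (Finset.Icc 1 n).card := Finset.card_le_card (Finset.union_subset hA hB)
      _ = n := by rw [Nat.card_Icc]; omega
  exact Finset.card_pos.mp (by omega)

theorem Dfam_maximal_intersecting (k : ℕ) (hk : 2 ≤ k) :
    (∀ A ∈ Dfam k, ∀ B ∈ Dfam k, (A ∩ B).Nonempty) ∧
    (∀ A : Finset ℕ, A ⊆ Finset.Icc 1 (4*k+7) → Odd A.card → A ∉ Dfam k →
      ∃ B ∈ Dfam k, A ∩ B = ∅) := by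
  constructor
  · rintro A ⟨hAs, hA⟩ B ⟨hBs, hB⟩
    rcases hA with hA | ⟨_, hAc⟩ <;> rcases hB with hB | ⟨_, hBc⟩
    · exact Am_inter hA hB
    · exact pigeonhole hAs hBs (by have := Am_card hA; omega)
    · exact pigeonhole hAs hBs (by have := Am_card hB; omega)
    · exact pigeonhole hAs hBs (by omega)
  · intro A hAsub hAodd hAnot
    have hnotAm : A ∉ Am k := fun h => hAnot ⟨hAsub, Or.inl h⟩
    have hlt : A.card < 2*k+5 := by
      by_contra h
      exact hAnot ⟨hAsub, Or.inr ⟨hAodd, by omega⟩⟩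
    obtain ⟨m, hm⟩ := hAodd
    have hle : A.card ≤ 2*k+3 := by omega
    -- some abbreviations
    have hIcard : (Finset.Icc 1 (4*k+7)).card = 4*k+7 := by rw [Nat.card_Icc]; omega
    have hLcard : (Finset.Icc 1 (4*k)).card = 4*k := by rw [Nat.card_Icc]; omega
    have hHI : Finset.Icc (4*k+1) (4*k+7) ⊆ Finset.Icc 1 (4*k+7) :=
      Finset.Icc_subset_Icc (by omega) le_rfl
    have hLI : Finset.Icc 1 (4*k) ⊆ Finset.Icc 1 (4*k+7) :=
      Finset.Icc_subset_Icc le_rfl (by omega)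
    by_cases hA2 : A.card ≤ 2*k+2
    · -- small case: take any (2k+5)-subset of the complement
      have hCcard : (Finset.Icc 1 (4*k+7) \ A).card = 4*k+7 - A.card := by
        rw [Finset.card_sdiff_of_subset hAsub, hIcard]
      obtain ⟨B, hBsub, hBcard⟩ :=
        Finset.exists_subset_card_eq (n := 2*k+5) (s := Finset.Icc 1 (4*k+7) \ A) (by omega)
      refine ⟨B, ⟨hBsub.trans (Finset.sdiff_subset), Or.inr ⟨⟨k+2, by omega⟩, by omega⟩⟩, ?_⟩
      rw [Finset.eq_empty_iff_forall_notMem]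
      intro x hx
      rw [Finset.mem_inter] at hx
      exact (Finset.mem_sdiff.mp (hBsub hx.2)).2 hx.1
    · -- |A| = 2k+3
      have hAc : A.card = 2*k+3 := by omega
      set AH := A ∩ Finset.Icc (4*k+1) (4*k+7) with hAH
      set AL := A ∩ Finset.Icc 1 (4*k) with hAL
      have hsplit : A = AL ∪ AH := by
        ext x
        simp only [hAL, hAH, Finset.mem_union, Finset.mem_inter, Finset.mem_Icc]
        constructor
        · intro hx
          have hx' := Finset.mem_Icc.mp (hAsub hx)
          by_cases h : x ≤ 4*k
          · exact Or.inl ⟨hx, by omega⟩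
          · exact Or.inr ⟨hx, by omega⟩
        · rintro (⟨h, _⟩ | ⟨h, _⟩) <;> exact h
      have hdLH : Disjoint AL AH :=
        ((HL_disj k).symm).mono Finset.inter_subset_right Finset.inter_subset_right
      have hsum : AL.card + AH.card = 2*k+3 := by
        rw [← Finset.card_union_of_disjoint hdLH, ← hsplit, hAc]
      have hAH7 : AH.card ≤ 7 := by
        calc AH.card ≤ (Finset.Icc (4*k+1) (4*k+7)).card :=
              Finset.card_le_card Finset.inter_subset_right
          _ = 7 := by rw [Nat.card_Icc]; omega
      -- complements
      have hHCeq : Finset.Icc (4*k+1) (4*k+7) \ A = Finset.Icc (4*k+1) (4*k+7) \ AH := by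
        ext x; simp only [hAH, Finset.mem_sdiff, Finset.mem_inter]; tauto
      have hLCeq : Finset.Icc 1 (4*k) \ A = Finset.Icc 1 (4*k) \ AL := by
        ext x; simp only [hAL, Finset.mem_sdiff, Finset.mem_inter]; tauto
      have hHCcard : (Finset.Icc (4*k+1) (4*k+7) \ A).card = 7 - AH.card := by
        rw [hHCeq, Finset.card_sdiff_of_subset Finset.inter_subset_right, Nat.card_Icc]
        congr 1; omega
      have hLCcard : (Finset.Icc 1 (4*k) \ A).card = 4*k - AL.card := by
        rw [hLCeq, Finset.card_sdiff_of_subset Finset.inter_subset_right, hLcard]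
      have hALle : AL.card ≤ 4*k := by
        calc AL.card ≤ (Finset.Icc 1 (4*k)).card := Finset.card_le_card Finset.inter_subset_right
          _ = 4*k := hLcard
      -- helper: disjointness of A with constructed unions
      have hdisjH : ∀ {S : Finset ℕ}, S ⊆ Finset.Icc (4*k+1) (4*k+7) \ A →
          ∀ x ∈ S, x ∉ A := fun hS x hx => (Finset.mem_sdiff.mp (hS hx)).2
      have hdisjL : ∀ {S : Finset ℕ}, S ⊆ Finset.Icc 1 (4*k) \ A →
          ∀ x ∈ S, x ∉ A := fun hS x hx => (Finset.mem_sdiff.mp (hS hx)).2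
      have hcase : AH.card = 0 ∨ AH.card = 1 ∨ AH.card = 2 ∨ AH.card = 3 ∨ 4 ≤ AH.card := by
        omega
      rcases hcase with h0 | h1 | h2 | h3 | h4
      · -- AH empty: A ∈ Am, contradiction
        exfalso
        apply hnotAm
        right; right; right
        have : AH = ∅ := Finset.card_eq_zero.mp h0
        rw [this, Finset.union_empty] at hsplit
        exact ⟨by rw [hsplit]; exact Finset.inter_subset_right, hAc⟩
      · exfalso
        apply hnotAm
        right; right; left
        exact ⟨AH, AL, Finset.inter_subset_right, h1, Finset.inter_subset_right, by omega,
          by rw [Finset.union_comm]; exact hsplit⟩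
      · exfalso
        apply hnotAm
        right; left
        exact ⟨AH, AL, Finset.inter_subset_right, h2, Finset.inter_subset_right, by omega,
          by rw [Finset.union_comm]; exact hsplit⟩
      · -- AH.card = 3
        by_cases hline : AH ∈ fanoShift k
        · exfalso
          apply hnotAm
          left
          exact ⟨AH, hline, AL, Finset.inter_subset_right, by omega,
            by rw [Finset.union_comm]; exact hsplit⟩
        · obtain ⟨T, hT, hTd⟩ := fano_cover Finset.inter_subset_right h3 hline
          refine ⟨T ∪ (Finset.Icc 1 (4*k) \ A), ⟨?_, Or.inl ?_⟩, ?_⟩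
          · exact Finset.union_subset ((line_sub hT).trans hHI)
              ((Finset.sdiff_subset).trans hLI)
          · exact Or.inl ⟨T, hT, Finset.Icc 1 (4*k) \ A, Finset.sdiff_subset,
              by omega, rfl⟩
          · rw [Finset.eq_empty_iff_forall_notMem]
            intro x hx
            rw [Finset.mem_inter, Finset.mem_union] at hx
            obtain ⟨hxA, hxT | hxL⟩ := hx
            · exact Finset.disjoint_left.mp hTd hxT
                (Finset.mem_inter.mpr ⟨hxA, line_sub hT hxT⟩)
            · exact (Finset.mem_sdiff.mp hxL).2 hxA
      · -- AH.card ≥ 4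
        have h47 : AH.card = 4 ∨ AH.card = 5 ∨ AH.card = 6 ∨ AH.card = 7 := by omega
        rcases h47 with h | h | h | h
        · -- 2 high + (2k+1) low
          obtain ⟨S', hS's, hS'c⟩ := Finset.exists_subset_card_eq
            (n := 2) (s := Finset.Icc (4*k+1) (4*k+7) \ A) (by omega)
          obtain ⟨S'', hS''s, hS''c⟩ := Finset.exists_subset_card_eq
            (n := 2*k+1) (s := Finset.Icc 1 (4*k) \ A) (by omega)
          refine ⟨S' ∪ S'', ⟨?_, Or.inl (Or.inr (Or.inl
            ⟨S', S'', hS's.trans Finset.sdiff_subset, hS'c,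
             hS''s.trans Finset.sdiff_subset, hS''c, rfl⟩))⟩, ?_⟩
          · exact Finset.union_subset ((hS's.trans Finset.sdiff_subset).trans hHI)
              ((hS''s.trans Finset.sdiff_subset).trans hLI)
          · rw [Finset.eq_empty_iff_forall_notMem]
            intro x hx
            rw [Finset.mem_inter, Finset.mem_union] at hx
            obtain ⟨hxA, hx1 | hx2⟩ := hx
            · exact hdisjH hS's x hx1 hxA
            · exact hdisjL hS''s x hx2 hxA
        · -- 1 high + (2k+2) low
          obtain ⟨S', hS's, hS'c⟩ := Finset.exists_subset_card_eq
            (n := 1) (s := Finset.Icc (4*k+1) (4*k+7) \ A) (by omega)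
          obtain ⟨S'', hS''s, hS''c⟩ := Finset.exists_subset_card_eq
            (n := 2*k+2) (s := Finset.Icc 1 (4*k) \ A) (by omega)
          refine ⟨S' ∪ S'', ⟨?_, Or.inl (Or.inr (Or.inr (Or.inl
            ⟨S', S'', hS's.trans Finset.sdiff_subset, hS'c,
             hS''s.trans Finset.sdiff_subset, hS''c, rfl⟩)))⟩, ?_⟩
          · exact Finset.union_subset ((hS's.trans Finset.sdiff_subset).trans hHI)
              ((hS''s.trans Finset.sdiff_subset).trans hLI)
          · rw [Finset.eq_empty_iff_forall_notMem]
            intro x hx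
            rw [Finset.mem_inter, Finset.mem_union] at hx
            obtain ⟨hxA, hx1 | hx2⟩ := hx
            · exact hdisjH hS's x hx1 hxA
            · exact hdisjL hS''s x hx2 hxA
        · -- all low, card 2k+3, from complement of size 2k+3
          obtain ⟨B, hBs, hBc⟩ := Finset.exists_subset_card_eq
            (n := 2*k+3) (s := Finset.Icc 1 (4*k) \ A) (by omega)
          refine ⟨B, ⟨(hBs.trans Finset.sdiff_subset).trans hLI,
            Or.inl (Or.inr (Or.inr (Or.inr ⟨hBs.trans Finset.sdiff_subset, hBc⟩)))⟩, ?_⟩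
          rw [Finset.eq_empty_iff_forall_notMem]
          intro x hx
          rw [Finset.mem_inter] at hx
          exact hdisjL hBs x hx.2 hx.1
        · obtain ⟨B, hBs, hBc⟩ := Finset.exists_subset_card_eq
            (n := 2*k+3) (s := Finset.Icc 1 (4*k) \ A) (by omega)
          refine ⟨B, ⟨(hBs.trans Finset.sdiff_subset).trans hLI,
            Or.inl (Or.inr (Or.inr (Or.inr ⟨hBs.trans Finset.sdiff_subset, hBc⟩)))⟩, ?_⟩
          rw [Finset.eq_empty_iff_forall_notMem]
          intro x hx
          rw [Finset.mem_inter] at hx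
          exact hdisjL hBs x hx.2 hx.1
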